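/- arXiv:2111.03135 — 2 statements merged into one kernel-verified Lean document; each statement's English description precedes it below -/
import Mathlib

section
/- There exist universal constants C > 0, c > 0 and c̃ > 0 such that for every input dimension d > C and every α > C, there exist a probability distribution D_x on ℝ^d and a function p* : ℝ^d → [0,1] that is a three-layer ReLU network, such that every two-layer ReLU network f of width l ≤ c·e^{c·d} satisfies E_{x∼D_x} |f(x) − p*(x)|² ≥ c̃²/α². -/
open MeasureTheory Real
open scoped FourierTransform RealInnerProductSpace BigOperators

/-- Bessel function of the first kind of order `ν`. -/
noncomputable def besselJ (ν : ℝ) (x : ℝ) : ℝ :=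
  ∑' k : ℕ, ((-1 : ℝ) ^ k / (Nat.factorial k * Real.Gamma ((k : ℝ) + ν + 1))) *
    (x / 2) ^ (2 * (k : ℝ) + ν)

/-- `R_d = π^{-1/2} Γ(d/2+1)^{1/d}`, radius of the Euclidean ball of volume 1 in `ℝ^d`. -/
noncomputable def ballRadius (d : ℕ) : ℝ :=
  Real.pi ^ (-(1 : ℝ) / 2) * Real.Gamma ((d : ℝ) / 2 + 1) ^ ((1 : ℝ) / d)

/-- `ψ(x) = (R_d/‖x‖)^{d/2} J_{d/2}(2π R_d ‖x‖)`. -/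
noncomputable def psi (d : ℕ) (x : EuclideanSpace ℝ (Fin d)) : ℝ :=
  (ballRadius d / ‖x‖) ^ ((d : ℝ) / 2) *
    besselJ ((d : ℝ) / 2) (2 * Real.pi * ballRadius d * ‖x‖)

/-- The interval `Δ_i = [(1+(i-1)/N)α√d, (1+i/N)α√d]`. -/
noncomputable def deltaInterval (d N : ℕ) (α : ℝ) (i : ℕ) : Set ℝ :=
  Set.Icc ((1 + ((i : ℝ) - 1) / N) * α * Real.sqrt d)
    ((1 + (i : ℝ) / N) * α * Real.sqrt d)

/-- `i` is good if `J_{d/2}(2π R_d x)² ≥ 1/(80π R_d x)` on all of `Δ_i`. -/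
def GoodIndex (d N : ℕ) (α : ℝ) (i : ℕ) : Prop :=
  ∀ x ∈ deltaInterval d N α i,
    (besselJ ((d : ℝ) / 2) (2 * Real.pi * ballRadius d * x)) ^ 2 ≥
      1 / (80 * Real.pi * ballRadius d * x)

open Classical in
/-- `g_i(x) = 1{‖x‖ ∈ Δ_i}` if `i` is good, `g_i ≡ 0` otherwise. -/
noncomputable def gfun (d N : ℕ) (α : ℝ) (i : ℕ) (x : EuclideanSpace ℝ (Fin d)) : ℝ :=
  if GoodIndex d N α i ∧ ‖x‖ ∈ deltaInterval d N α i then 1 else 0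

/-- The measure on `ℝ^d` with density `ψ²` w.r.t. Lebesgue measure. -/
noncomputable def psiMeasure (d : ℕ) : Measure (EuclideanSpace ℝ (Fin d)) :=
  volume.withDensity fun x => ENNReal.ofReal ((psi d x) ^ 2)

/-- A two-layer ReLU network of width `l` on `ℝ^d`. -/
def IsTwoLayer (d l : ℕ) (f : EuclideanSpace ℝ (Fin d) → ℝ) : Prop :=
  ∃ (v b : Fin l → ℝ) (w : Fin l → EuclideanSpace ℝ (Fin d)),
    ∀ x, f x = ∑ i, v i * max (⟪w i, x⟫ + b i) 0

/-- A three-layer ReLU network of width `l` on `ℝ^d`. -/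
def IsThreeLayer (d l : ℕ) (g : EuclideanSpace ℝ (Fin d) → ℝ) : Prop :=
  ∃ (u c : Fin l → ℝ) (v b : Fin l → Fin l → ℝ)
    (w : Fin l → Fin l → EuclideanSpace ℝ (Fin d)),
    ∀ x, g x = ∑ i, u i *
      max ((∑ j, v i j * max (⟪w i j, x⟫ + b i j) 0) + c i) 0


lemma integrable_dirac'' {α} [MeasurableSpace α] [MeasurableSingletonClass α]
    {f : α → ℝ} (hf : Measurable f) (a : α) : Integrable f (Measure.dirac a) := by
  refine ⟨hf.aestronglyMeasurable, ?_⟩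
  rw [HasFiniteIntegral, lintegral_dirac]
  exact ENNReal.coe_lt_top

lemma sum_range_triple (g : ℕ → ℝ) (K : ℕ) :
    ∑ j ∈ Finset.range (3 * K), g j
      = ∑ m ∈ Finset.range K, (g (3*m) + g (3*m+1) + g (3*m+2)) := by
  induction K with
  | zero => simp
  | succ n ih =>
    rw [show 3 * (n+1) = (3*n+1+1)+1 by ring, Finset.sum_range_succ, Finset.sum_range_succ,
      Finset.sum_range_succ, ih, Finset.sum_range_succ]
    ring

lemma triple_bound (e0 e1 e2 : ℝ) (h : e0 - 2*e1 + e2 = 2 ∨ e0 - 2*e1 + e2 = -2) :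
    e0^2 + e1^2 + e2^2 ≥ 2/3 := by
  rcases h with h | h <;>
    nlinarith [sq_nonneg (e0 - e2), sq_nonneg (e0 + e2 + e1), sq_nonneg (e0 + e2 - e1),
      sq_nonneg (e0 + e2 + 2*e1), sq_nonneg (e0 + e2)]

lemma hat_eq (s : ℝ) : max (s+1) 0 - 2 * max s 0 + max (s-1) 0 = max (1 - |s|) 0 := by
  rcases le_total s (-1) with h | h
  · rw [abs_of_nonpos (by linarith), max_eq_right (by linarith), max_eq_right (by linarith),
      max_eq_right (by linarith), max_eq_right (by linarith)]
    ring
  · rcases le_total s 0 with h0 | h0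
    · rw [abs_of_nonpos h0, max_eq_left (by linarith), max_eq_right h0,
        max_eq_right (by linarith), max_eq_left (by linarith)]
      ring
    · rcases le_total s 1 with h1 | h1
      · rw [abs_of_nonneg h0, max_eq_left (by linarith), max_eq_left h0,
          max_eq_right (by linarith), max_eq_left (by linarith)]
        ring
      · rw [abs_of_nonneg h0, max_eq_left (by linarith), max_eq_left h0,
          max_eq_left (by linarith), max_eq_right (by linarith)]
        ring

lemma unit_second_diff (a b s : ℝ) (h : (a*s + b) * (a*(s+2) + b) ≥ 0) :
    max (a*s + b) 0 - 2 * max (a*(s+1) + b) 0 + max (a*(s+2) + b) 0 = 0 := by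
  set u := a*s + b with hu
  set w := a*(s+2) + b with hw
  have hmid : a*(s+1) + b = (u + w)/2 := by rw [hu, hw]; ring
  rcases le_or_gt 0 u with h0u | h0u
  · rcases le_or_gt 0 w with h0w | h0w
    · rw [hmid, max_eq_left h0u, max_eq_left h0w, max_eq_left (by linarith)]; ring
    · have : u = 0 := by nlinarith
      rw [hmid, this, max_eq_left le_rfl, max_eq_right (le_of_lt h0w),
        max_eq_right (by linarith)]
      ring
  · rcases le_or_gt 0 w with h0w | h0w
    · have : w = 0 := by nlinarith
      rw [hmid, this, max_eq_right (le_of_lt h0u), max_eq_left le_rfl,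
        max_eq_right (by linarith)]
      ring
    · rw [hmid, max_eq_right (le_of_lt h0u), max_eq_right (le_of_lt h0w),
        max_eq_right (by linarith)]
      ring

lemma core (l S : ℕ) (hlS : l ≤ S) (v a b : Fin l → ℝ) :
    ∑ k ∈ Finset.range (6 * S),
      ((∑ i, v i * max (a i * k + b i) 0) - ((k % 2 : ℕ) : ℝ))^2 ≥ 2/3 * S := by
  classical
  set F : ℝ → ℝ := fun t => ∑ i, v i * max (a i * t + b i) 0 with hF
  set e : ℕ → ℝ := fun k => (F k - ((k % 2 : ℕ) : ℝ))^2 with he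
  have hsum : ∑ k ∈ Finset.range (6 * S), e k
      = ∑ m ∈ Finset.range (2*S), (e (3*m) + e (3*m+1) + e (3*m+2)) := by
    rw [show 6 * S = 3 * (2*S) by ring, sum_range_triple]
  set Bad : Finset ℕ := (Finset.range (2*S)).filter
    (fun m => ∃ i, (a i * (3*(m:ℝ)) + b i) * (a i * (3*(m:ℝ)+2) + b i) < 0) with hBad
  have hBadcard : Bad.card ≤ l := by
    have hsub : Bad ⊆ Finset.image (fun i : Fin l => ⌊(-b i / a i)/3⌋.toNat) Finset.univ := by
      intro m hm
      rw [hBad, Finset.mem_filter] at hm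
      obtain ⟨hmr, i, hi⟩ := hm
      rw [Finset.mem_image]
      refine ⟨i, Finset.mem_univ i, ?_⟩
      have hane : a i ≠ 0 := by
        intro h; rw [h] at hi; simp at hi; nlinarith [sq_nonneg (b i)]
      set t : ℝ := -b i / a i with ht
      have hb : b i = -(a i * t) := by rw [ht]; field_simp
      have h1 : ((a i)^2) * (((3*(m:ℝ)) - t) * ((3*(m:ℝ)+2) - t)) < 0 := by
        rw [hb] at hi; nlinarith [hi]
      have hA : 0 < (a i)^2 := by positivity
      have h2 : ((3*(m:ℝ)) - t) * ((3*(m:ℝ)+2) - t) < 0 := by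
        nlinarith
      have h3 : (3*(m:ℝ)) < t := by nlinarith
      have h4 : t < 3*(m:ℝ) + 2 := by nlinarith
      have hfl : ⌊t/3⌋ = (m : ℤ) := by
        rw [Int.floor_eq_iff]
        constructor
        · push_cast; linarith
        · push_cast; linarith
      rw [hfl]
      simp
    calc Bad.card ≤ _ := Finset.card_le_card hsub
    _ ≤ Finset.univ.card := Finset.card_image_le
    _ = l := by simp
  have hgood : ∀ m ∈ Finset.range (2*S) \ Bad,
      e (3*m) + e (3*m+1) + e (3*m+2) ≥ 2/3 := by
    intro m hm
    rw [Finset.mem_sdiff, hBad, Finset.mem_filter] at hm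
    have hnb : ∀ i : Fin l,
        (a i * (3*(m:ℝ)) + b i) * (a i * ((3*(m:ℝ))+2) + b i) ≥ 0 := by
      intro i
      by_contra hlt
      push_neg at hlt
      exact hm.2 ⟨hm.1, i, hlt⟩
    have hFdiff : F (3*(m:ℝ)) - 2 * F ((3*(m:ℝ))+1) + F ((3*(m:ℝ))+2) = 0 := by
      rw [hF]
      simp only [Finset.mul_sum, ← Finset.sum_sub_distrib, ← Finset.sum_add_distrib]
      refine Finset.sum_eq_zero fun i _ => ?_
      have h := unit_second_diff (a i) (b i) (3*(m:ℝ)) (hnb i)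
      linear_combination v i * h
    have hc0 : ((3*m : ℕ) : ℝ) = 3*(m:ℝ) := by push_cast; ring
    have hc1 : ((3*m+1 : ℕ) : ℝ) = (3*(m:ℝ))+1 := by push_cast; ring
    have hc2 : ((3*m+2 : ℕ) : ℝ) = (3*(m:ℝ))+2 := by push_cast; ring
    rw [he]
    simp only [hc0, hc1, hc2]
    apply triple_bound
    rcases Nat.even_or_odd m with hme | hmo
    · obtain ⟨r, hr⟩ := hme
      have h0 : (3*m) % 2 = 0 := by omega
      have h1 : (3*m+1) % 2 = 1 := by omega
      have h2 : (3*m+2) % 2 = 0 := by omega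
      left
      rw [h0, h1, h2]
      push_cast
      linarith [hFdiff]
    · obtain ⟨r, hr⟩ := hmo
      have h0 : (3*m) % 2 = 1 := by omega
      have h1 : (3*m+1) % 2 = 0 := by omega
      have h2 : (3*m+2) % 2 = 1 := by omega
      right
      rw [h0, h1, h2]
      push_cast
      linarith [hFdiff]
  -- put it together
  have henn : ∀ k, 0 ≤ e k := fun k => sq_nonneg _
  have hsub2 : Finset.range (2*S) \ Bad ⊆ Finset.range (2*S) := Finset.sdiff_subset
  have hch : ∑ m ∈ Finset.range (2*S), (e (3*m) + e (3*m+1) + e (3*m+2))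
      ≥ ∑ m ∈ Finset.range (2*S) \ Bad, (e (3*m) + e (3*m+1) + e (3*m+2)) := by
    apply Finset.sum_le_sum_of_subset_of_nonneg hsub2
    intro k _ _
    have := henn (3*k); have := henn (3*k+1); have := henn (3*k+2)
    linarith
  have hcard : (Finset.range (2*S) \ Bad).card ≥ S := by
    have hB : Bad ⊆ Finset.range (2*S) := Finset.filter_subset _ _
    rw [Finset.card_sdiff_of_subset hB, Finset.card_range]
    omega
  have hlb : ∑ m ∈ Finset.range (2*S) \ Bad, (e (3*m) + e (3*m+1) + e (3*m+2))
      ≥ (Finset.range (2*S) \ Bad).card * (2/3 : ℝ) := by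
    calc ∑ m ∈ Finset.range (2*S) \ Bad, (e (3*m) + e (3*m+1) + e (3*m+2))
        ≥ ∑ _m ∈ Finset.range (2*S) \ Bad, (2/3 : ℝ) :=
          Finset.sum_le_sum hgood
      _ = (Finset.range (2*S) \ Bad).card * (2/3 : ℝ) := by
          rw [Finset.sum_const, nsmul_eq_mul]
  have : ∑ k ∈ Finset.range (6 * S), e k ≥ (S : ℝ) * (2/3) := by
    rw [hsum]
    have hcc : ((Finset.range (2*S) \ Bad).card : ℝ) ≥ (S : ℝ) := by exact_mod_cast hcard
    nlinarith [hch, hlb, hcc]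
  calc ∑ k ∈ Finset.range (6 * S),
      ((∑ i, v i * max (a i * k + b i) 0) - ((k % 2 : ℕ) : ℝ))^2
      = ∑ k ∈ Finset.range (6 * S), e k := rfl
    _ ≥ (S : ℝ) * (2/3) := this
    _ = 2/3 * S := by ring

lemma hat_term_int (k m : ℕ) :
    max (1 - |(k:ℝ) - (2*(m:ℝ)+1)|) 0 = if k = 2*m+1 then 1 else 0 := by
  by_cases h : k = 2*m+1
  · subst h; push_cast; simp
  · rw [if_neg h]
    rcases Nat.lt_or_ge k (2*m+1) with hlt | hge
    · have hk : k ≤ 2*m := by omega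
      have : (k:ℝ) ≤ 2*(m:ℝ) := by exact_mod_cast hk
      rw [max_eq_right]
      rw [abs_of_nonpos (by linarith)]
      linarith
    · have hk : 2*m+2 ≤ k := by omega
      have : (2*(m:ℝ)+2) ≤ (k:ℝ) := by exact_mod_cast hk
      rw [max_eq_right]
      rw [abs_of_nonneg (by linarith)]
      linarith

lemma hat_sum_at_int (K k : ℕ) (hk : k < 2*K) :
    ∑ m ∈ Finset.range K, max (1 - |(k:ℝ) - (2*(m:ℝ)+1)|) 0 = ((k % 2 : ℕ) : ℝ) := by
  simp only [hat_term_int]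
  rcases Nat.even_or_odd k with he | ho
  · have h2 : k % 2 = 0 := Nat.even_iff.mp he
    rw [h2, Nat.cast_zero]
    apply Finset.sum_eq_zero
    intro m _
    rw [if_neg (by intro hcon; rw [hcon] at h2; omega)]
  · obtain ⟨r, hr⟩ := ho
    have h2 : k % 2 = 1 := by omega
    rw [h2]
    have : ∀ m ∈ Finset.range K, (if k = 2*m+1 then (1:ℝ) else 0) = (if r = m then (1:ℝ) else 0) := by
      intro m _
      congr 1
      simp only [eq_iff_iff]
      omega
    rw [Finset.sum_congr rfl this, Finset.sum_ite_eq, if_pos]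
    · norm_num
    · rw [Finset.mem_range]; omega

lemma hat_sum_le_one (K : ℕ) (T : ℝ) :
    ∑ m ∈ Finset.range K, max (1 - |T - (2*(m:ℝ)+1)|) 0 ≤ 1 := by
  by_cases H : ∀ m ∈ Finset.range K, max (1 - |T - (2*(m:ℝ)+1)|) 0 = 0
  · rw [Finset.sum_eq_zero H]; norm_num
  · push_neg at H
    obtain ⟨m0, hm0, hne⟩ := H
    have hpos : 0 < 1 - |T - (2*(m0:ℝ)+1)| := by
      rcases lt_or_ge 0 (1 - |T - (2*(m0:ℝ)+1)|) with h | h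
      · exact h
      · exact absurd (max_eq_right h) hne
    have : ∑ m ∈ Finset.range K, max (1 - |T - (2*(m:ℝ)+1)|) 0
        = max (1 - |T - (2*(m0:ℝ)+1)|) 0 := by
      apply Finset.sum_eq_single_of_mem m0 hm0
      intro m _ hmne
      have hd : |(2*(m:ℝ)+1) - (2*(m0:ℝ)+1)| ≥ 2 := by
        rcases Nat.lt_or_ge m m0 with h | h
        · have : (m:ℝ) + 1 ≤ (m0:ℝ) := by exact_mod_cast h
          rw [abs_of_nonpos (by linarith)]; linarith
        · have hm : m0 < m := by omega
          have : (m0:ℝ) + 1 ≤ (m:ℝ) := by exact_mod_cast hm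
          rw [abs_of_nonneg (by linarith)]; linarith
      have : |T - (2*(m:ℝ)+1)| ≥ 1 := by
        have htri := abs_sub_abs_le_abs_sub ((2*(m:ℝ)+1) - (2*(m0:ℝ)+1)) (T - (2*(m0:ℝ)+1))
        have h1 : ((2*(m:ℝ)+1) - (2*(m0:ℝ)+1)) - (T - (2*(m0:ℝ)+1)) = -(T - (2*(m:ℝ)+1)) := by ring
        rw [h1, abs_neg] at htri
        linarith
      rw [max_eq_right]
      linarith
    rw [this, max_eq_left (le_of_lt hpos)]
    have := abs_nonneg (T - (2*(m0:ℝ)+1))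
    linarith


section MainProof
open scoped ENNReal

/-- separation between two- and three-layer ReLU networks.
There are universal constants `C, c, c̃ > 0` such that for every dimension `d > C` and
every `α > C` there are a probability distribution `D_x` on `ℝ^d` and a probability
function `p* : ℝ^d → [0,1]` which is a three-layer ReLU network, such that every
two-layer ReLU network of width `l ≤ c·e^{c d}` satisfies
`E_{x ∼ D_x} |f(x) − p*(x)|² ≥ c̃²/α²`. -/
theorem two_vs_three_layer_separation :
    ∃ C c ctilde : ℝ, 0 < C ∧ 0 < c ∧ 0 < ctilde ∧
      ∀ (d : ℕ) (α : ℝ), (d : ℝ) > C → α > C →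
        ∃ (Dx : Measure (EuclideanSpace ℝ (Fin d))) (_ : IsProbabilityMeasure Dx)
          (p : EuclideanSpace ℝ (Fin d) → ℝ) (L : ℕ),
          IsThreeLayer d L p ∧ (∀ x, p x ∈ Set.Icc (0 : ℝ) 1) ∧
          ∀ (l : ℕ) (f : EuclideanSpace ℝ (Fin d) → ℝ),
            (l : ℝ) ≤ c * Real.exp (c * d) → IsTwoLayer d l f →
            ∫ x, (f x - p x) ^ 2 ∂Dx ≥ ctilde ^ 2 / α ^ 2 := by
  unfold IsThreeLayer IsTwoLayer
  refine ⟨1, 1, 1/3, one_pos, one_pos, by norm_num, ?_⟩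
  intro d α hd hα
  have hd2 : 2 ≤ d := by
    have : 1 < d := by exact_mod_cast hd
    omega
  set S : ℕ := Nat.ceil (Real.exp d) with hS
  have hS1 : 1 ≤ S := by
    rw [hS]
    have := Real.exp_pos (d : ℝ)
    exact Nat.one_le_iff_ne_zero.mpr (by positivity)
  set i0 : Fin d := ⟨0, by omega⟩ with hi0
  set xk : ℕ → EuclideanSpace ℝ (Fin d) :=
    fun k => EuclideanSpace.single i0 (k:ℝ) with hxk
  set p : EuclideanSpace ℝ (Fin d) → ℝ :=
    fun x => ∑ m ∈ Finset.range (3*S), max (1 - |x i0 - (2*(m:ℝ)+1)|) 0 with hp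
  set Dx : Measure (EuclideanSpace ℝ (Fin d)) :=
    ((6*S : ℕ) : ℝ≥0∞)⁻¹ • ∑ k ∈ Finset.range (6*S), Measure.dirac (xk k) with hDx
  have hprob : IsProbabilityMeasure Dx := by
    constructor
    rw [hDx, Measure.smul_apply, smul_eq_mul, Measure.finset_sum_apply]
    simp only [measure_univ, Finset.sum_const, Finset.card_range, nsmul_eq_mul, mul_one]
    rw [ENNReal.inv_mul_cancel]
    · simp; omega
    · exact ENNReal.natCast_ne_top _
  -- p is continuous
  have hpcont : Continuous p := by
    rw [hp]
    apply continuous_finset_sum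
    intro m _
    apply Continuous.max _ continuous_const
    apply Continuous.sub continuous_const
    apply Continuous.abs
    apply Continuous.sub _ continuous_const
    fun_prop
  -- p values at grid points
  have hpval : ∀ k : ℕ, k < 6*S → p (xk k) = ((k % 2 : ℕ) : ℝ) := by
    intro k hk
    rw [hp, hxk]
    simp only [EuclideanSpace.single_apply, if_pos rfl]
    exact hat_sum_at_int (3*S) k (by omega)
  -- p ∈ [0,1]
  have hpIcc : ∀ x, p x ∈ Set.Icc (0:ℝ) 1 := by
    intro x
    constructor
    · rw [hp]
      exact Finset.sum_nonneg fun m _ => le_max_right _ _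
    · exact hat_sum_le_one (3*S) (x i0)
  -- three-layer structure
  refine ⟨Dx, hprob, p, 9*S, ?_, hpIcc, ?_⟩
  · -- IsThreeLayer
    haveI : NeZero (9*S) := ⟨by omega⟩
    refine ⟨fun i => if i = 0 then 1 else 0, fun _ => 0,
      fun _ j => if (j:ℕ) % 3 = 1 then (-2:ℝ) else 1,
      fun _ j => -(2*((((j:ℕ)/3 : ℕ)):ℝ) + ((((j:ℕ)%3 : ℕ)):ℝ)),
      fun _ _ => EuclideanSpace.single i0 (1:ℝ), ?_⟩
    intro x
    have hinner : ∀ i : Fin (9*S),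
        (∑ j : Fin (9*S), (if (j:ℕ) % 3 = 1 then (-2:ℝ) else 1) *
          max (⟪EuclideanSpace.single i0 (1:ℝ), x⟫ +
            (-(2*((((j:ℕ)/3 : ℕ)):ℝ) + ((((j:ℕ)%3 : ℕ)):ℝ)))) 0) = p x := by
      intro i
      have hip : ⟪EuclideanSpace.single i0 (1:ℝ), x⟫ = x i0 := by
        rw [EuclideanSpace.inner_single_left]
        simp
      simp only [hip]
      rw [Fin.sum_univ_eq_sum_range
        (fun n => (if n % 3 = 1 then (-2:ℝ) else 1) *
          max (x i0 + (-(2*(((n/3 : ℕ)):ℝ) + (((n%3 : ℕ)):ℝ)))) 0)]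
      rw [show 9*S = 3*(3*S) by ring, sum_range_triple]
      rw [hp]
      apply Finset.sum_congr rfl
      intro m _
      have e0 : (3*m) % 3 = 0 := by omega
      have e1 : (3*m+1) % 3 = 1 := by omega
      have e2 : (3*m+2) % 3 = 2 := by omega
      have d0 : (3*m) / 3 = m := by omega
      have d1 : (3*m+1) / 3 = m := by omega
      have d2 : (3*m+2) / 3 = m := by omega
      rw [e0, e1, e2, d0, d1, d2]
      norm_num
      rw [show x i0 + -(2*(m:ℝ)) = (x i0 - (2*(m:ℝ)+1)) + 1 by ring,
        show x i0 + (-1 + -(2*(m:ℝ))) = (x i0 - (2*(m:ℝ)+1)) by ring,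
        show x i0 + (-2 + -(2*(m:ℝ))) = (x i0 - (2*(m:ℝ)+1)) - 1 by ring]
      linarith [hat_eq (x i0 - (2*(m:ℝ)+1))]
    have hsummand : ∀ i : Fin (9*S), (if i = (0 : Fin (9*S)) then (1:ℝ) else 0) *
        max ((∑ j : Fin (9*S), (if (j:ℕ) % 3 = 1 then (-2:ℝ) else 1) *
          max (⟪EuclideanSpace.single i0 (1:ℝ), x⟫ +
            (-(2*((((j:ℕ)/3 : ℕ)):ℝ) + ((((j:ℕ)%3 : ℕ)):ℝ)))) 0) + 0) 0
        = if i = (0 : Fin (9*S)) then p x else 0 := by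
      intro i
      rw [add_zero, hinner i, max_eq_left (hpIcc x).1]
      split_ifs <;> ring
    rw [Finset.sum_congr rfl (fun i _ => hsummand i),
      Finset.sum_ite_eq' Finset.univ (0 : Fin (9*S)) (fun _ => p x),
      if_pos (Finset.mem_univ _)]
  · -- the lower bound
    intro l f hl hf
    obtain ⟨v, bb, w, hfw⟩ := hf
    have hfc : f = fun x => ∑ i, v i * max (⟪w i, x⟫ + bb i) 0 := funext hfw
    subst hfc
    have hfcont : Continuous fun x : EuclideanSpace ℝ (Fin d) =>
        ((∑ i, v i * max (⟪w i, x⟫ + bb i) 0) - p x)^2 := by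
      apply Continuous.pow
      apply Continuous.sub _ hpcont
      apply continuous_finset_sum
      intro i _
      apply Continuous.mul continuous_const
      apply Continuous.max _ continuous_const
      exact (Continuous.inner continuous_const continuous_id).add continuous_const
    have hmeas := hfcont.measurable
    have hlS : l ≤ S := by
      have h1 : (l : ℝ) ≤ Real.exp d := by
        rw [one_mul, one_mul] at hl; exact hl
      have h2 : Real.exp d ≤ (S : ℝ) := Nat.le_ceil _
      exact_mod_cast h1.trans h2
    rw [hDx, integral_smul_measure,
      integral_finset_sum_measure (fun k _ => integrable_dirac'' hmeas _)]
    simp_rw [integral_dirac]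
    have hkey : ∑ k ∈ Finset.range (6*S),
        ((∑ i, v i * max (⟪w i, xk k⟫ + bb i) 0) - p (xk k))^2 ≥ 2/3 * S := by
      have hterm : ∀ k ∈ Finset.range (6*S),
          ((∑ i, v i * max (⟪w i, xk k⟫ + bb i) 0) - p (xk k))^2
          = ((∑ i, v i * max ((w i) i0 * (k:ℝ) + bb i) 0) - ((k % 2 : ℕ) : ℝ))^2 := by
        intro k hk
        rw [Finset.mem_range] at hk
        rw [hpval k hk]
        congr 2
        apply Finset.sum_congr rfl
        intro i _
        congr 2
        rw [hxk]
        rw [EuclideanSpace.inner_single_right]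
        simp [mul_comm]
      rw [Finset.sum_congr rfl hterm]
      exact core l S hlS v (fun i => (w i) i0) bb
    have htr : (((6*S : ℕ) : ℝ≥0∞)⁻¹).toReal = ((6*S : ℕ) : ℝ)⁻¹ := by
      rw [ENNReal.toReal_inv]
      simp
    rw [htr, smul_eq_mul]
    have hSpos : (0:ℝ) < S := by exact_mod_cast hS1
    have h6S : ((6*S : ℕ) : ℝ) = 6 * (S:ℝ) := by push_cast; ring
    rw [h6S]
    have hstep : (6 * (S:ℝ))⁻¹ * (∑ k ∈ Finset.range (6*S),
        ((∑ i, v i * max (⟪w i, xk k⟫ + bb i) 0) - p (xk k))^2) ≥ (6*(S:ℝ))⁻¹ * (2/3 * S) := by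
      apply mul_le_mul_of_nonneg_left hkey
      positivity
    have hval : (6*(S:ℝ))⁻¹ * (2/3 * S) = 1/9 := by
      field_simp
      ring
    rw [hval] at hstep
    have hα2 : (1:ℝ) ≤ α^2 := by nlinarith
    have : (1/3 : ℝ)^2 / α^2 ≤ 1/9 := by
      rw [div_le_iff₀ (by nlinarith)]
      nlinarith
    linarith

end MainProof
end

section
/- Let H be a real inner product space and let q, w ∈ H with ‖q‖ = ‖w‖ = 1. Then for all scalars β₁, β₂ > 0, ‖β₁ q − β₂ w‖ ≥ (β₂/2)·‖q − w‖ = (β₂/2)·√(2(1 − ⟨q, w⟩)). -/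
open scoped RealInnerProductSpace

/-- for unit vectors `q, w` in a real inner product space and scalars
`β₁, β₂ > 0`, `‖β₁ q − β₂ w‖ ≥ (β₂/2)‖q − w‖`, and `‖q − w‖ = √(2(1 − ⟪q,w⟫))`. -/
theorem scaled_unit_vector_distance {H : Type*} [NormedAddCommGroup H]
    [InnerProductSpace ℝ H] (q w : H) (hq : ‖q‖ = 1) (hw : ‖w‖ = 1)
    (β₁ β₂ : ℝ) (hβ₁ : 0 < β₁) (hβ₂ : 0 < β₂) :
    ‖β₁ • q - β₂ • w‖ ≥ β₂ / 2 * ‖q - w‖ ∧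
      ‖q - w‖ = Real.sqrt (2 * (1 - ⟪q, w⟫)) := by
  set t : ℝ := ⟪q, w⟫ with ht
  have hqw : ‖q - w‖ ^ 2 = 2 - 2 * t := by
    rw [@norm_sub_sq_real, hq, hw]; ring
  have htle : |t| ≤ 1 := by
    have := abs_real_inner_le_norm q w
    rwa [hq, hw, mul_one] at this
  have ht1 : t ≤ 1 := (abs_le.mp htle).2
  have ht2 : -1 ≤ t := (abs_le.mp htle).1
  have hsq : ‖β₁ • q - β₂ • w‖ ^ 2 = β₁ ^ 2 + β₂ ^ 2 - 2 * β₁ * β₂ * t := by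
    rw [@norm_sub_sq_real, norm_smul, norm_smul, real_inner_smul_left,
      real_inner_smul_right, hq, hw, Real.norm_eq_abs, Real.norm_eq_abs,
      abs_of_pos hβ₁, abs_of_pos hβ₂, ← ht]
    ring
  constructor
  · have key : (β₂ / 2 * ‖q - w‖) ^ 2 ≤ ‖β₁ • q - β₂ • w‖ ^ 2 := by
      rw [hsq, mul_pow, hqw]
      nlinarith [sq_nonneg (β₁ - β₂ * t), sq_nonneg β₁, sq_nonneg β₂,
        mul_pos hβ₁ hβ₂, sq_nonneg (β₁ - β₂), sq_nonneg (β₁ + β₂ * t),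
        mul_nonneg (mul_pos hβ₂ hβ₂).le (sub_nonneg.mpr ht1),
        mul_nonneg (mul_pos hβ₁ hβ₂).le (by linarith : (0:ℝ) ≤ 1 + t),
        mul_nonneg (mul_pos hβ₁ hβ₂).le (sub_nonneg.mpr ht1)]
    have h1 : 0 ≤ β₂ / 2 * ‖q - w‖ := by positivity
    nlinarith [norm_nonneg (β₁ • q - β₂ • w)]
  · rw [show 2 * (1 - t) = ‖q - w‖ ^ 2 by rw [hqw]; ring]
    exact (Real.sqrt_sq (norm_nonneg _)).symm
end
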